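/- arXiv:2502.18170 — 3 statements merged into one kernel-verified Lean document; each statement's English description precedes it below -/
import Mathlib

section
/- Under the uniform mixture N of all 3^N Pauli basis measurements on N qubits, every Pauli observable P of weight w is an eigenvector of the measurement information channel H_N with eigenvalue 3^{-w}. -/
open Matrix

noncomputable def sigmaX : Matrix (Fin 2) (Fin 2) ℂ := !![0, 1; 1, 0]
noncomputable def sigmaY : Matrix (Fin 2) (Fin 2) ℂ := !![0, -Complex.I; Complex.I, 0]
noncomputable def sigmaZ : Matrix (Fin 2) (Fin 2) ℂ := !![1, 0; 0, -1]

noncomputable def pauli3 : Fin 3 → Matrix (Fin 2) (Fin 2) ℂ := ![sigmaX, sigmaY, sigmaZ]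

noncomputable def pauliTensor {N : ℕ} (σ : Fin N → Matrix (Fin 2) (Fin 2) ℂ) :
    Matrix (Fin N → Fin 2) (Fin N → Fin 2) ℂ :=
  fun x y => ∏ j, σ j (x j) (y j)

def sgn (b : Bool) : ℂ := if b then 1 else -1

/-- The POVM element `M_x^P = ⊗_j (I + x_j σ_j)/2` of the Pauli basis measurement. -/
noncomputable def pauliPOVM {N : ℕ} (σ : Fin N → Matrix (Fin 2) (Fin 2) ℂ)
    (x : Fin N → Bool) : Matrix (Fin N → Fin 2) (Fin N → Fin 2) ℂ :=
  pauliTensor (fun j => ((1 : ℂ) / 2) • ((1 : Matrix (Fin 2) (Fin 2) ℂ) + sgn (x j) • σ j))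

/-- The measurement information channel of a POVM `{M x}`. -/
noncomputable def MIC {d : Type*} [Fintype d] [DecidableEq d] {X : Type*} [Fintype X]
    (M : X → Matrix d d ℂ) (A : Matrix d d ℂ) : Matrix d d ℂ :=
  ∑ x, ((M x * A).trace / (M x).trace) • M x

/-- The MIC of the uniform mixture of all `3^N` Pauli basis measurements. -/
noncomputable def micUniformPauli (N : ℕ)
    (A : Matrix (Fin N → Fin 2) (Fin N → Fin 2) ℂ) :
    Matrix (Fin N → Fin 2) (Fin N → Fin 2) ℂ :=
  ((1 : ℂ) / 3 ^ N) • ∑ s : Fin N → Fin 3, MIC (pauliPOVM (fun j => pauli3 (s j))) A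

lemma trace_pauli3 (i : Fin 3) : (pauli3 i).trace = 0 := by
  fin_cases i <;> simp [pauli3, sigmaX, sigmaY, sigmaZ, Matrix.trace_fin_two_of]

lemma trace_pauli3_mul (i i' : Fin 3) : (pauli3 i * pauli3 i').trace = if i = i' then 2 else 0 := by
  fin_cases i <;> fin_cases i' <;>
    simp [pauli3, sigmaX, sigmaY, sigmaZ, Matrix.mul_fin_two, Matrix.trace_fin_two_of,
      Complex.I_mul_I] <;> norm_num

lemma pauli3_injective : Function.Injective pauli3 := by
  intro i i' h
  by_contra hne
  have h2 : (2:ℂ) = if i = i' then 2 else 0 := by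
    rw [← trace_pauli3_mul i i', h, trace_pauli3_mul, if_pos rfl]
  rw [if_neg hne] at h2; norm_num at h2

noncomputable def Amat (b : Bool) (σ : Matrix (Fin 2) (Fin 2) ℂ) : Matrix (Fin 2) (Fin 2) ℂ :=
  ((1 : ℂ) / 2) • ((1 : Matrix (Fin 2) (Fin 2) ℂ) + sgn b • σ)

lemma trace_Amat (b : Bool) (i : Fin 3) : (Amat b (pauli3 i)).trace = 1 := by
  simp [Amat, trace_smul, trace_add, trace_pauli3, Matrix.trace_one]

lemma trace_Amat_mul (b : Bool) (i i' : Fin 3) :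
    (Amat b (pauli3 i) * pauli3 i').trace = if i = i' then sgn b else 0 := by
  simp only [Amat, smul_mul_assoc, add_mul, one_mul, trace_smul, trace_add, trace_pauli3,
    trace_pauli3_mul, smul_eq_mul]
  rcases eq_or_ne i i' with h | h <;> simp [h, sgn] <;> cases b <;> norm_num

lemma sum_Amat (σ : Matrix (Fin 2) (Fin 2) ℂ) : ∑ b : Bool, Amat b σ = 1 := by
  simp [Fintype.sum_bool, Amat, sgn]
  module

lemma sum_sgn_Amat (σ : Matrix (Fin 2) (Fin 2) ℂ) : ∑ b : Bool, sgn b • Amat b σ = σ := by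
  simp [Fintype.sum_bool, Amat, sgn]
  module

lemma prod_sum_pi {N : ℕ} {α : Type*} [Fintype α] (f : Fin N → α → ℂ) :
    ∑ x : Fin N → α, ∏ j, f j (x j) = ∏ j, ∑ a, f j a := by
  rw [← Fintype.piFinset_univ, Finset.sum_prod_piFinset]

lemma trace_pauliTensor {N : ℕ} (f : Fin N → Matrix (Fin 2) (Fin 2) ℂ) :
    (pauliTensor f).trace = ∏ j, (f j).trace := by
  simp only [Matrix.trace, Matrix.diag, pauliTensor]
  rw [prod_sum_pi (fun j a => f j a a)]

set_option maxHeartbeats 1000000 in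

lemma trace_pauliTensor_mul {N : ℕ} (f g : Fin N → Matrix (Fin 2) (Fin 2) ℂ) :
    (pauliTensor f * pauliTensor g).trace = ∏ j, (f j * g j).trace := by
  simp only [Matrix.trace, Matrix.diag, Matrix.mul_apply, pauliTensor]
  trans (∑ x : Fin N → Fin 2, ∏ j, ∑ b, f j (x j) b * g j b (x j))
  · refine Finset.sum_congr rfl fun x _ => ?_
    simp only [← Finset.prod_mul_distrib]
    exact prod_sum_pi (fun j b => f j (x j) b * g j b (x j))
  · exact prod_sum_pi (fun j a => ∑ b, f j a b * g j b a)

lemma sum_smul_pauliTensor {N : ℕ} {α : Type*} [Fintype α] (c : Fin N → α → ℂ)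
    (F : Fin N → α → Matrix (Fin 2) (Fin 2) ℂ) :
    ∑ x : Fin N → α, (∏ j, c j (x j)) • pauliTensor (fun j => F j (x j))
      = pauliTensor (fun j => ∑ a, c j a • F j a) := by
  ext a b
  simp only [Matrix.sum_apply, Matrix.smul_apply, pauliTensor, smul_eq_mul,
    ← Finset.prod_mul_distrib]
  exact prod_sum_pi (fun j t => c j t * F j t (a j) (b j))

lemma pauliTensor_eq_zero {N : ℕ} (f : Fin N → Matrix (Fin 2) (Fin 2) ℂ) (j0 : Fin N)
    (h : f j0 = 0) : pauliTensor f = 0 := by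
  ext a b
  exact Finset.prod_eq_zero (Finset.mem_univ j0) (by simp [h])

lemma pauli3_ne_one (i : Fin 3) : pauli3 i ≠ 1 := by
  intro h
  have := trace_pauli3 i
  rw [h, Matrix.trace_one] at this
  simp at this

open Classical in

lemma trace_Amat_mul_general (b : Bool) (i : Fin 3) (τ : Matrix (Fin 2) (Fin 2) ℂ)
    (hτ : τ ∈ ({sigmaX, sigmaY, sigmaZ, 1} : Set (Matrix (Fin 2) (Fin 2) ℂ))) :
    (Amat b (pauli3 i) * τ).trace =
      if τ = 1 then 1 else if pauli3 i = τ then sgn b else 0 := by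
  have h0 : pauli3 0 = sigmaX := rfl
  have h1 : pauli3 1 = sigmaY := rfl
  have h2 : pauli3 2 = sigmaZ := rfl
  rcases hτ with h | h | h | h
  · subst h; rw [← h0, trace_Amat_mul, if_neg (pauli3_ne_one 0)]
    simp [pauli3_injective.eq_iff]
  · subst h; rw [← h1, trace_Amat_mul, if_neg (pauli3_ne_one 1)]
    simp [pauli3_injective.eq_iff]
  · subst h; rw [← h2, trace_Amat_mul, if_neg (pauli3_ne_one 2)]
    simp [pauli3_injective.eq_iff]
  · rw [h, mul_one, trace_Amat, if_pos rfl]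

open Classical in

lemma mic_single {N : ℕ} (σ' : Fin N → Matrix (Fin 2) (Fin 2) ℂ)
    (hσ' : ∀ j, σ' j ∈ ({sigmaX, sigmaY, sigmaZ, 1} : Set (Matrix (Fin 2) (Fin 2) ℂ)))
    (s : Fin N → Fin 3) :
    MIC (pauliPOVM (fun j => pauli3 (s j))) (pauliTensor σ')
      = if ∀ j, σ' j ≠ 1 → pauli3 (s j) = σ' j then pauliTensor σ' else 0 := by
  set c : Fin N → Bool → ℂ :=
    fun j b => if σ' j = 1 then 1 else if pauli3 (s j) = σ' j then sgn b else 0 with hc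
  have hM : ∀ x : Fin N → Bool,
      pauliPOVM (fun j => pauli3 (s j)) x = pauliTensor (fun j => Amat (x j) (pauli3 (s j))) :=
    fun x => rfl
  have htr : ∀ x : Fin N → Bool, (pauliPOVM (fun j => pauli3 (s j)) x).trace = 1 := by
    intro x
    rw [hM x, trace_pauliTensor]
    simp [trace_Amat]
  have htrmul : ∀ x : Fin N → Bool,
      (pauliPOVM (fun j => pauli3 (s j)) x * pauliTensor σ').trace = ∏ j, c j (x j) := by
    intro x
    rw [hM x, trace_pauliTensor_mul]
    exact Finset.prod_congr rfl fun j _ => trace_Amat_mul_general (x j) (s j) (σ' j) (hσ' j)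
  have hmic : MIC (pauliPOVM (fun j => pauli3 (s j))) (pauliTensor σ')
      = pauliTensor (fun j => ∑ b : Bool, c j b • Amat b (pauli3 (s j))) := by
    unfold MIC
    rw [← sum_smul_pauliTensor c (fun j b => Amat b (pauli3 (s j)))]
    refine Finset.sum_congr rfl fun x _ => ?_
    rw [htr x, htrmul x, hM x, div_one]
  rw [hmic]
  by_cases hmatch : ∀ j, σ' j ≠ 1 → pauli3 (s j) = σ' j
  · rw [if_pos hmatch]
    refine congrArg pauliTensor (funext fun j => ?_)
    by_cases h1 : σ' j = 1
    · calc ∑ b : Bool, c j b • Amat b (pauli3 (s j))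
          = ∑ b : Bool, Amat b (pauli3 (s j)) := by
            refine Finset.sum_congr rfl fun b _ => ?_
            simp [hc, h1]
        _ = 1 := sum_Amat _
        _ = σ' j := h1.symm
    · have heq := hmatch j h1
      calc ∑ b : Bool, c j b • Amat b (pauli3 (s j))
          = ∑ b : Bool, sgn b • Amat b (pauli3 (s j)) := by
            refine Finset.sum_congr rfl fun b _ => ?_
            simp [hc, h1, heq]
        _ = pauli3 (s j) := sum_sgn_Amat _
        _ = σ' j := heq
  · rw [if_neg hmatch]
    push_neg at hmatch
    obtain ⟨j0, hne, hnm⟩ := hmatch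
    refine pauliTensor_eq_zero _ j0 ?_
    simp [hc, if_neg hne, if_neg hnm]

open Classical in

lemma count_matching {N : ℕ} (σ' : Fin N → Matrix (Fin 2) (Fin 2) ℂ)
    (hσ' : ∀ j, σ' j ∈ ({sigmaX, sigmaY, sigmaZ, 1} : Set (Matrix (Fin 2) (Fin 2) ℂ))) :
    (Finset.univ.filter fun s : Fin N → Fin 3 => ∀ j, σ' j ≠ 1 → pauli3 (s j) = σ' j).card
      = 3 ^ (N - (Finset.univ.filter fun j => σ' j ≠ 1).card) := by
  have hset : (Finset.univ.filter fun s : Fin N → Fin 3 => ∀ j, σ' j ≠ 1 → pauli3 (s j) = σ' j)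
      = Fintype.piFinset (fun j => Finset.univ.filter fun t => σ' j ≠ 1 → pauli3 t = σ' j) := by
    ext s
    simp [Fintype.mem_piFinset]
  rw [hset, Fintype.card_piFinset]
  have hone : ∀ j, (Finset.univ.filter fun t : Fin 3 => σ' j ≠ 1 → pauli3 t = σ' j).card
      = if σ' j = 1 then 3 else 1 := by
    intro j
    by_cases h1 : σ' j = 1
    · rw [if_pos h1]
      have he : (Finset.univ.filter fun t : Fin 3 => σ' j ≠ 1 → pauli3 t = σ' j)
          = Finset.univ :=
        Finset.filter_true_of_mem fun t _ hn => absurd h1 hn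
      rw [he, Finset.card_univ, Fintype.card_fin]
    · rw [if_neg h1]
      have hex : ∃ i0 : Fin 3, pauli3 i0 = σ' j := by
        rcases hσ' j with h | h | h | h
        · exact ⟨0, h.symm⟩
        · exact ⟨1, h.symm⟩
        · exact ⟨2, h.symm⟩
        · exact absurd h h1
      obtain ⟨i0, hi0⟩ := hex
      have he : (Finset.univ.filter fun t : Fin 3 => σ' j ≠ 1 → pauli3 t = σ' j) = {i0} := by
        ext t
        simp only [Finset.mem_filter, Finset.mem_univ, true_and, Finset.mem_singleton]
        constructor
        · intro hp
          exact pauli3_injective ((hp h1).trans hi0.symm)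
        · rintro rfl _
          exact hi0
      rw [he, Finset.card_singleton]
  rw [Finset.prod_congr rfl fun j _ => hone j, Finset.prod_ite, Finset.prod_const,
    Finset.prod_const_one, mul_one]
  congr 1
  have := Finset.card_filter_add_card_filter_not
    (s := (Finset.univ : Finset (Fin N))) (p := fun j => σ' j = 1)
  simp only [Finset.card_univ, Fintype.card_fin] at this
  have h2 : (Finset.univ.filter fun j : Fin N => ¬ σ' j = 1).card
      = (Finset.univ.filter fun j : Fin N => σ' j ≠ 1).card := by
    congr 1
  omega

theorem mic_uniform_pauli_eigenvalue {N : ℕ}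
    (σ' : Fin N → Matrix (Fin 2) (Fin 2) ℂ)
    (hσ' : ∀ j, σ' j ∈ ({sigmaX, sigmaY, sigmaZ, 1} : Set (Matrix (Fin 2) (Fin 2) ℂ)))
    (Q : Matrix (Fin N → Fin 2) (Fin N → Fin 2) ℂ) (hQ : Q = pauliTensor σ')
    (hQne : Q ≠ 1)
    (w : ℕ) (hw : w = (Finset.univ.filter (fun j => σ' j ≠ 1)).card) :
    micUniformPauli N Q = ((1 : ℂ) / 3 ^ w) • Q := by
  classical
  subst hQ
  have hwN : w ≤ N := by
    rw [hw]
    simpa using Finset.card_filter_le Finset.univ (fun j : Fin N => σ' j ≠ 1)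
  unfold micUniformPauli
  have hsum : ∑ s : Fin N → Fin 3, MIC (pauliPOVM (fun j => pauli3 (s j))) (pauliTensor σ')
      = ((3 ^ (N - w) : ℕ) : ℂ) • pauliTensor σ' := by
    trans (∑ s : Fin N → Fin 3,
        if ∀ j, σ' j ≠ 1 → pauli3 (s j) = σ' j then pauliTensor σ' else 0)
    · exact Finset.sum_congr rfl fun s _ => mic_single σ' hσ' s
    · rw [← Finset.sum_filter, Finset.sum_const, count_matching σ' hσ', ← hw,
        Nat.cast_smul_eq_nsmul]
  rw [hsum, smul_smul]
  congr 1
  push_cast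
  have h3 : (3 : ℂ) ^ (N - w) * 3 ^ w = 3 ^ N := by
    rw [← pow_add]
    congr 1
    omega
  have h30 : (3 : ℂ) ≠ 0 := by norm_num
  field_simp
  linear_combination h3
end

section
/- The median of a binomial distribution Bin(n, p) lies in the interval [⌊np⌋, ⌈np⌉]; i.e., Pr[Bin(n,p) ≤ ⌈np⌉] ≥ 1/2 and Pr[Bin(n,p) ≥ ⌊np⌋] ≥ 1/2. -/
/-
Write `T m x = P(Bin(n, x) ≥ m)`. It is a polynomial in `x`, nondecreasing on `[0, 1]` since its
derivative is `n b_{n-1,m-1}(x)`, where `b_{n,k}(x) = C(n,k) x^k (1-x)^(n-k)` are the Bernstein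
polynomials. As `⌊np⌋ / n ≤ p`, it suffices to show `T m (m / n) ≥ 1/2`, i.e. that `m` is a median
when the mean `m` is an integer; the other half of the claim follows from the symmetry
`k ↦ n - k`, `p ↦ 1 - p`.

If `2m ≤ n`, the weights satisfy `b(m-1-j) ≤ b(m+j)` for `j < m`, so `P(X < m) ≤ P(m ≤ X < 2m)`.
If `2m ≥ n`, put `p = m/n` and `q = 1 - p ≤ p`. Then `b_{n-1,m-1}(p + u) ≤ b_{n-1,m-1}(p - u)` for
`0 ≤ u < q` (compare logarithmic derivatives), so `u ↦ T m (p - u) + T m (p + u)` is antitone on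
`[0, q]`, and comparing `u = 0` with `u = q` gives `2 T m p ≥ T m 1 = 1`.
-/
open Finset Polynomial Real

theorem Nat.floor_natCast_sub {R : Type*} [CommRing R] [LinearOrder R] [IsStrictOrderedRing R]
    [FloorRing R] (n : ℕ) {x : R} (hx : 0 ≤ x) : ⌊(n : R) - x⌋₊ = n - ⌈x⌉₊ := by
  rcases le_or_gt x n with hxn | hnx
  · have hc : ⌈x⌉₊ ≤ n := Nat.ceil_le.2 hxn
    rw [Nat.floor_eq_iff (by linarith), Nat.cast_sub hc]
    constructor
    · linarith [Nat.le_ceil x]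
    · linarith [Nat.ceil_lt_add_one hx]
  · rw [Nat.floor_of_nonpos (by linarith), Nat.sub_eq_zero_of_le (Nat.lt_ceil.2 hnx).le]

lemma monotoneOn_weighted_log_ratio (a b : ℕ) {p q u : ℝ} (huq : u < q) (hqp : q ≤ p)
    (hab : a * q ≤ b * p) :
    MonotoneOn (fun t => a * log (p - t) + b * log (q + t) - (a * log (p + t) + b * log (q - t)))
      (Set.Icc 0 u) := by
  have hderiv : ∀ t ∈ Set.Icc 0 u, HasDerivAt
      (fun t => a * log (p - t) + b * log (q + t) - (a * log (p + t) + b * log (q - t)))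
      (2 * (b * q * (p ^ 2 - t ^ 2) - a * p * (q ^ 2 - t ^ 2)) /
        ((p - t) * (p + t) * ((q - t) * (q + t)))) t := by
    rintro t ⟨ht0, htu⟩
    have h1 : p - t ≠ 0 := by linarith
    have h2 : q + t ≠ 0 := by linarith
    have h3 : p + t ≠ 0 := by linarith
    have h4 : q - t ≠ 0 := by linarith
    have := (((((hasDerivAt_id t).const_sub p).log h1).const_mul (a : ℝ)).add
      ((((hasDerivAt_id t).const_add q).log h2).const_mul (b : ℝ))).sub
      (((((hasDerivAt_id t).const_add p).log h3).const_mul (a : ℝ)).add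
      ((((hasDerivAt_id t).const_sub q).log h4).const_mul (b : ℝ)))
    refine this.congr_deriv ?_
    simp only [id]
    field_simp
    ring
  refine monotoneOn_of_deriv_nonneg (convex_Icc 0 u)
    (fun t ht => (hderiv t ht).continuousAt.continuousWithinAt)
    (fun t ht => (hderiv t (interior_subset ht)).differentiableAt.differentiableWithinAt)
    fun t ht => ?_
  rw [interior_Icc] at ht
  obtain ⟨ht0, htu⟩ := ht
  rw [(hderiv t ⟨ht0.le, htu.le⟩).deriv]
  have hnum : 0 ≤ b * q * (p ^ 2 - t ^ 2) - a * p * (q ^ 2 - t ^ 2) := by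
    -- the numerator is affine in `t ^ 2`, and nonnegative at `t = 0` and at `t = q`
    have hsplit : q * (b * q * (p ^ 2 - t ^ 2) - a * p * (q ^ 2 - t ^ 2)) =
        (q ^ 2 - t ^ 2) * (p * (b * p - a * q)) + t ^ 2 * (b * (p ^ 2 - q ^ 2)) := by ring
    have hqt : 0 ≤ q ^ 2 - t ^ 2 := by nlinarith
    have hpq : 0 ≤ p ^ 2 - q ^ 2 := by nlinarith
    have hba : 0 ≤ b * p - a * q := by linarith
    refine nonneg_of_mul_nonneg_right ?_ (by linarith : 0 < q)
    rw [hsplit]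
    exact add_nonneg (mul_nonneg hqt (mul_nonneg (by linarith) hba))
      (mul_nonneg (sq_nonneg t) (mul_nonneg b.cast_nonneg hpq))
  refine div_nonneg (by linarith) (mul_nonneg (mul_nonneg ?_ ?_) (mul_nonneg ?_ ?_)) <;> linarith

lemma add_pow_mul_sub_pow_le (a b : ℕ) {p q u : ℝ} (hu : 0 ≤ u) (huq : u < q) (hqp : q ≤ p)
    (hab : a * q ≤ b * p) : (p + u) ^ a * (q - u) ^ b ≤ (p - u) ^ a * (q + u) ^ b := by
  have hlog := monotoneOn_weighted_log_ratio a b huq hqp hab ⟨le_rfl, hu⟩ ⟨hu, le_rfl⟩ hu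
  simp only [sub_zero, add_zero, sub_self] at hlog
  have h1 : 0 < p - u := by linarith
  have h2 : 0 < q - u := by linarith
  have h3 : 0 < p + u := by linarith
  have h4 : 0 < q + u := by linarith
  rw [← log_le_log_iff (by positivity) (by positivity), log_mul (by positivity) (by positivity),
    log_mul (by positivity) (by positivity), log_pow, log_pow, log_pow, log_pow]
  linarith

lemma sq_sub_sq_mul_one_sub_sq_le {M N s x : ℝ} (hs : 0 < s) (hsM : s < M) (hMN : M ≤ N)
    (hx1 : x ≤ 1) (hMx : M * (1 - x) ≤ N * x) :
    (M ^ 2 - s ^ 2) * (1 - x) ^ 2 ≤ ((N + 1) ^ 2 - s ^ 2) * x ^ 2 := by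
  have hsq : (M * (1 - x)) ^ 2 ≤ (N * x) ^ 2 :=
    pow_le_pow_left₀ (mul_nonneg (by linarith) (by linarith)) hMx 2
  refine le_of_mul_le_mul_left ?_ (pow_pos (hs.trans hsM) 2)
  calc M ^ 2 * ((M ^ 2 - s ^ 2) * (1 - x) ^ 2) = (M ^ 2 - s ^ 2) * (M * (1 - x)) ^ 2 := by ring
    _ ≤ (M ^ 2 - s ^ 2) * (N * x) ^ 2 := mul_le_mul_of_nonneg_left hsq (by nlinarith)
    _ ≤ M ^ 2 * (((N + 1) ^ 2 - s ^ 2) * x ^ 2) := by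
      have h1 : 0 ≤ N ^ 2 - M ^ 2 := by nlinarith
      have h2 : 0 ≤ 2 * N + 1 := by linarith
      nlinarith [mul_nonneg (mul_nonneg (sq_nonneg x) (sq_nonneg s)) h1,
        mul_nonneg (mul_nonneg (sq_nonneg x) (sq_nonneg M)) h2]

namespace bernsteinPolynomial

variable {n k : ℕ} {x : ℝ}

lemma eval_eq (n k : ℕ) (x : ℝ) :
    (bernsteinPolynomial ℝ n k).eval x = n.choose k * x ^ k * (1 - x) ^ (n - k) := by
  simp [bernsteinPolynomial]

lemma eval_nonneg (h0 : 0 ≤ x) (h1 : x ≤ 1) : 0 ≤ (bernsteinPolynomial ℝ n k).eval x := by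
  have : 0 ≤ 1 - x := by linarith
  rw [eval_eq]
  positivity

lemma eval_one_sub (hk : k ≤ n) (x : ℝ) :
    (bernsteinPolynomial ℝ n k).eval (1 - x) = (bernsteinPolynomial ℝ n (n - k)).eval x := by
  rw [← flip ℝ n k hk, eval_comp]
  simp

lemma succ_mul_eval_succ (hk : k < n) (x : ℝ) :
    (k + 1) * (1 - x) * (bernsteinPolynomial ℝ n (k + 1)).eval x =
      (n - k) * x * (bernsteinPolynomial ℝ n k).eval x := by
  have hchoose : (n.choose (k + 1) : ℝ) * (k + 1) = n.choose k * (n - k) := by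
    have := Nat.choose_succ_right_eq n k
    rw [← Nat.cast_sub hk.le]
    exact_mod_cast this
  obtain ⟨r, rfl⟩ := Nat.exists_eq_add_of_lt hk
  simp only [eval_eq, show k + r + 1 - k = r + 1 by omega, show k + r + 1 - (k + 1) = r by omega]
  linear_combination x ^ k * x * (1 - x) ^ r * (1 - x) * hchoose

lemma eval_le_eval_succ (hx0 : 0 < x) (hx1 : x ≤ 1) (hk : k < n)
    (h : (k + 1) * (1 - x) ≤ (n - k) * x) :
    (bernsteinPolynomial ℝ n k).eval x ≤ (bernsteinPolynomial ℝ n (k + 1)).eval x := by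
  have hnk : (0 : ℝ) < n - k := by
    have : (k : ℝ) < n := by exact_mod_cast hk
    linarith
  refine le_of_mul_le_mul_left ?_ (mul_pos hnk hx0)
  calc (n - k) * x * (bernsteinPolynomial ℝ n k).eval x
      = (k + 1) * (1 - x) * (bernsteinPolynomial ℝ n (k + 1)).eval x :=
        (succ_mul_eval_succ hk x).symm
    _ ≤ (n - k) * x * (bernsteinPolynomial ℝ n (k + 1)).eval x :=
      mul_le_mul_of_nonneg_right h (eval_nonneg hx0.le hx1)

lemma eval_le_eval_succ_of_eval_succ_le {c d : ℕ} (hx0 : 0 < x) (hx1 : x < 1) (hc : c < n)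
    (hd : d < n) (hcd : (c + 1) * (d + 1) * (1 - x) ^ 2 ≤ (n - c) * (n - d) * x ^ 2)
    (h : (bernsteinPolynomial ℝ n (c + 1)).eval x ≤ (bernsteinPolynomial ℝ n d).eval x) :
    (bernsteinPolynomial ℝ n c).eval x ≤ (bernsteinPolynomial ℝ n (d + 1)).eval x := by
  have hnc : (0 : ℝ) < n - c := by
    have : (c : ℝ) < n := by exact_mod_cast hc
    linarith
  have hK : 0 < (n - c) * x * ((d + 1) * (1 - x)) := by
    have : 0 < 1 - x := by linarith
    positivity
  have hcoef : 0 ≤ (n - c) * (n - d) * x ^ 2 := le_trans (by positivity) hcd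
  refine le_of_mul_le_mul_left ?_ hK
  calc (n - c) * x * ((d + 1) * (1 - x)) * (bernsteinPolynomial ℝ n c).eval x
      = (d + 1) * (1 - x) * ((n - c) * x * (bernsteinPolynomial ℝ n c).eval x) := by ring
    _ = (c + 1) * (d + 1) * (1 - x) ^ 2 * (bernsteinPolynomial ℝ n (c + 1)).eval x := by
      rw [← succ_mul_eval_succ hc]; ring
    _ ≤ (n - c) * (n - d) * x ^ 2 * (bernsteinPolynomial ℝ n (c + 1)).eval x :=
      mul_le_mul_of_nonneg_right hcd (eval_nonneg hx0.le hx1.le)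
    _ ≤ (n - c) * (n - d) * x ^ 2 * (bernsteinPolynomial ℝ n d).eval x :=
      mul_le_mul_of_nonneg_left h hcoef
    _ = (n - c) * x * ((n - d) * x * (bernsteinPolynomial ℝ n d).eval x) := by ring
    _ = (n - c) * x * ((d + 1) * (1 - x)) * (bernsteinPolynomial ℝ n (d + 1)).eval x := by
      rw [← succ_mul_eval_succ hd]; ring

lemma eval_sub_one_sub_le_eval_add {m : ℕ} (hx0 : 0 < x) (hx1 : x < 1) (h2m : 2 * m ≤ n)
    (hm : m ≤ n * x) (j : ℕ) (hj : j < m) :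
    (bernsteinPolynomial ℝ n (m - 1 - j)).eval x ≤ (bernsteinPolynomial ℝ n (m + j)).eval x := by
  induction j with
  | zero =>
    obtain ⟨k, rfl⟩ := Nat.exists_eq_add_of_le' hj
    simp only [Nat.add_sub_cancel, Nat.sub_zero, Nat.add_zero]
    refine eval_le_eval_succ hx0 hx1.le (by omega) ?_
    push_cast at hm
    nlinarith
  | succ j ih =>
    obtain ⟨c, rfl⟩ : ∃ c, m = c + j + 2 := ⟨m - j - 2, by omega⟩
    have hih := ih (by omega)
    rw [show c + j + 2 - 1 - j = c + 1 by omega] at hih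
    rw [show c + j + 2 - 1 - (j + 1) = c by omega, ← add_assoc]
    refine eval_le_eval_succ_of_eval_succ_le hx0 hx1 (by omega) (by omega) ?_ hih
    have hn : 2 * ((c : ℝ) + j + 2) ≤ n := by exact_mod_cast h2m
    push_cast at hm ⊢
    -- `c + 1 = m - s` and `d + 1 = m + s` for `s = j + 1`, while `n - c` and `n - d` are
    -- `(n - m + 1) ± s`
    have key := sq_sub_sq_mul_one_sub_sq_le (M := (c : ℝ) + j + 2) (s := (j : ℝ) + 1)
      (N := n - (c + j + 2)) (x := x) (by positivity) (by linarith [c.cast_nonneg (α := ℝ)])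
      (by linarith) (by linarith) (by linarith)
    linear_combination key

lemma eval_add_le_eval_sub {m : ℕ} {p u : ℝ} (hu : 0 ≤ u) (hup : u < 1 - p)
    (hp : 1 - p ≤ p) (h : m * (1 - p) ≤ (n - m : ℕ) * p) :
    (bernsteinPolynomial ℝ n m).eval (p + u) ≤ (bernsteinPolynomial ℝ n m).eval (p - u) := by
  have hpow := add_pow_mul_sub_pow_le m (n - m) hu hup hp h
  simp only [eval_eq, mul_assoc, sub_add_eq_sub_sub, sub_sub_eq_add_sub,
    add_sub_right_comm 1 u p]
  exact mul_le_mul_of_nonneg_left hpow (Nat.cast_nonneg _)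

end bernsteinPolynomial

-- `(bernsteinTail n m).eval x` is `P(Bin(n, x) ≥ m)`.
noncomputable def bernsteinTail (n m : ℕ) : ℝ[X] := ∑ k ∈ Icc m n, bernsteinPolynomial ℝ n k

lemma eval_bernsteinTail (n m : ℕ) (x : ℝ) :
    (bernsteinTail n m).eval x = ∑ k ∈ Icc m n, (n.choose k : ℝ) * x ^ k * (1 - x) ^ (n - k) := by
  simp [bernsteinTail, eval_finsetSum, bernsteinPolynomial.eval_eq]

lemma eval_bernsteinTail_nonneg (n m : ℕ) {x : ℝ} (h0 : 0 ≤ x) (h1 : x ≤ 1) :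
    0 ≤ (bernsteinTail n m).eval x := by
  rw [bernsteinTail, eval_finsetSum]
  exact sum_nonneg fun k _ => bernsteinPolynomial.eval_nonneg h0 h1

lemma sum_range_add_eval_bernsteinTail {n m : ℕ} (hm : m ≤ n + 1) (x : ℝ) :
    ∑ k ∈ range m, (bernsteinPolynomial ℝ n k).eval x + (bernsteinTail n m).eval x = 1 := by
  rw [bernsteinTail, eval_finsetSum, ← Ico_add_one_right_eq_Icc, sum_range_add_sum_Ico _ hm,
    ← eval_finsetSum, bernsteinPolynomial.sum, eval_one]

lemma eval_bernsteinTail_zero (n : ℕ) (x : ℝ) : (bernsteinTail n 0).eval x = 1 := by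
  simpa using sum_range_add_eval_bernsteinTail (Nat.zero_le (n + 1)) x

lemma eval_bernsteinTail_one {n m : ℕ} (hm : m ≤ n) : (bernsteinTail n m).eval 1 = 1 := by
  rw [bernsteinTail, eval_finsetSum, sum_eq_single_of_mem n (by simp [hm])]
  · simp [bernsteinPolynomial.eval_at_1]
  · intro k _ hk
    simp [bernsteinPolynomial.eval_at_1, hk]

lemma derivative_bernsteinTail (n m : ℕ) :
    derivative (bernsteinTail n (m + 1)) = n * bernsteinPolynomial ℝ (n - 1) m := by
  rcases Nat.lt_or_ge n (m + 1) with h | h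
  · rcases Nat.eq_zero_or_pos n with rfl | hn
    · simp [bernsteinTail]
    · rw [bernsteinTail, Icc_eq_empty (by omega), sum_empty, derivative_zero,
        bernsteinPolynomial.eq_zero_of_lt ℝ (by omega), mul_zero]
  · obtain ⟨n, rfl⟩ := Nat.exists_eq_add_of_le' (Nat.one_le_of_lt h)
    have hshift : Icc (m + 1) (n + 1) = (Icc m n).map (addRightEmbedding 1) := by
      simp
    rw [bernsteinTail, derivative_sum, hshift, sum_map]
    simp only [addRightEmbedding_apply, bernsteinPolynomial.derivative_succ, ← mul_sum]
    have htelescope := sum_Icc_sub (by omega : m ≤ n) (bernsteinPolynomial ℝ n)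
    rw [bernsteinPolynomial.eq_zero_of_lt ℝ (Nat.lt_succ_self n), zero_sub] at htelescope
    simp_rw [Nat.add_sub_cancel, ← neg_sub (bernsteinPolynomial ℝ n (_ + 1)), sum_neg_distrib,
      htelescope, neg_neg]

lemma monotoneOn_eval_bernsteinTail (n m : ℕ) :
    MonotoneOn (fun x => (bernsteinTail n m).eval x) (Set.Icc 0 1) := by
  cases m with
  | zero =>
    simp only [eval_bernsteinTail_zero]
    exact monotoneOn_const
  | succ m =>
    refine monotoneOn_of_deriv_nonneg (convex_Icc 0 1) (Polynomial.continuousOn _)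
      (Polynomial.differentiableOn _) fun x hx => ?_
    rw [interior_Icc] at hx
    rw [Polynomial.deriv, derivative_bernsteinTail, eval_mul, eval_natCast]
    exact mul_nonneg n.cast_nonneg (bernsteinPolynomial.eval_nonneg hx.1.le hx.2.le)

lemma sum_Icc_zero_eval_eq_eval_bernsteinTail {n c : ℕ} (hc : c ≤ n) (x : ℝ) :
    ∑ k ∈ Icc 0 c, (bernsteinPolynomial ℝ n k).eval x = (bernsteinTail n (n - c)).eval (1 - x) := by
  have hreflect := sum_Ico_reflect (fun k => (bernsteinPolynomial ℝ n k).eval (1 - x)) 0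
    (by omega : c + 1 ≤ n + 1)
  rw [Nat.add_sub_add_right, Nat.sub_zero] at hreflect
  rw [bernsteinTail, eval_finsetSum, ← Ico_add_one_right_eq_Icc, ← Ico_add_one_right_eq_Icc,
    ← hreflect]
  refine sum_congr rfl fun k hk => ?_
  rw [bernsteinPolynomial.eval_one_sub (Nat.sub_le n k), Nat.sub_sub_self (by simp at hk; omega)]

lemma half_le_eval_bernsteinTail_of_two_mul_le {n m : ℕ} {x : ℝ} (hx0 : 0 < x) (hx1 : x < 1)
    (h2m : 2 * m ≤ n) (hm : m ≤ n * x) : 1 / 2 ≤ (bernsteinTail n m).eval x := by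
  have htotal := sum_range_add_eval_bernsteinTail (by omega : m ≤ n + 1) x
  have hlower : ∑ k ∈ range m, (bernsteinPolynomial ℝ n k).eval x ≤
      ∑ k ∈ Ico m (m + m), (bernsteinPolynomial ℝ n k).eval x := by
    rw [← sum_range_reflect, sum_Ico_eq_sum_range, Nat.add_sub_cancel]
    exact sum_le_sum fun j hj =>
      bernsteinPolynomial.eval_sub_one_sub_le_eval_add hx0 hx1 h2m hm j (mem_range.1 hj)
  have hupper : ∑ k ∈ Ico m (m + m), (bernsteinPolynomial ℝ n k).eval x ≤
      (bernsteinTail n m).eval x := by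
    rw [bernsteinTail, eval_finsetSum]
    exact sum_le_sum_of_subset_of_nonneg (fun k hk => by simp at hk ⊢; omega)
      fun k _ _ => bernsteinPolynomial.eval_nonneg hx0.le hx1.le
  linarith

lemma half_le_eval_bernsteinTail_of_le_two_mul {n m : ℕ} (hm : 0 < m) (hmn : m ≤ n)
    (h2m : n ≤ 2 * m) : 1 / 2 ≤ (bernsteinTail n m).eval ((m : ℝ) / n) := by
  obtain ⟨m, rfl⟩ : ∃ m', m = m' + 1 := ⟨m - 1, by omega⟩
  set p : ℝ := ((m + 1 : ℕ) : ℝ) / n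
  set T : ℝ → ℝ := fun x => (bernsteinTail n (m + 1)).eval x
  set T' : ℝ → ℝ := fun x => (n * bernsteinPolynomial ℝ (n - 1) m).eval x
  have hT : ∀ x, HasDerivAt T (T' x) x := fun x => by
    simpa only [derivative_bernsteinTail] using Polynomial.hasDerivAt (bernsteinTail n (m + 1)) x
  have hG : ∀ u, HasDerivAt (fun u => T (p - u) + T (p + u)) (-T' (p - u) + T' (p + u)) u := by
    intro u
    have := ((hT (p - u)).comp u ((hasDerivAt_id u).const_sub p)).add
      ((hT (p + u)).comp u ((hasDerivAt_id u).const_add p))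
    exact this.congr_deriv (by simp)
  have hn : (0 : ℝ) < n := by exact_mod_cast (show 0 < n by omega)
  have hpn : p * n = m + 1 := by rw [div_mul_cancel₀ _ hn.ne']; push_cast; ring
  have hmn' : (m : ℝ) + 1 ≤ n := by exact_mod_cast hmn
  have h2m' : (n : ℝ) ≤ 2 * (m + 1) := by exact_mod_cast h2m
  have hp1 : p ≤ 1 := le_of_mul_le_mul_right (by linarith) hn
  have hqp : 1 - p ≤ p := le_of_mul_le_mul_right (by rw [sub_mul]; linarith) hn
  have hq0 : 0 ≤ 1 - p := by linarith
  have hanti : AntitoneOn (fun u => T (p - u) + T (p + u)) (Set.Icc 0 (1 - p)) := by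
    refine antitoneOn_of_deriv_nonpos (convex_Icc 0 (1 - p))
      (HasDerivAt.continuousOn fun u _ => hG u)
      (fun u _ => (hG u).differentiableAt.differentiableWithinAt) fun u hu => ?_
    rw [interior_Icc] at hu
    have hmp : (m : ℝ) * (1 - p) ≤ ((n - 1 - m : ℕ) : ℝ) * p := by
      rw [Nat.sub_sub, Nat.cast_sub (by omega)]
      refine le_of_mul_le_mul_right ?_ hn
      push_cast
      nlinarith
    have := bernsteinPolynomial.eval_add_le_eval_sub hu.1.le hu.2 hqp hmp
    simp only [(hG u).deriv, T', eval_mul, eval_natCast]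
    nlinarith
  have hG := hanti ⟨le_rfl, hq0⟩ ⟨hq0, le_rfl⟩ hq0
  simp only [sub_zero, add_zero, add_sub_cancel, T] at hG
  rw [eval_bernsteinTail_one hmn] at hG
  linarith [eval_bernsteinTail_nonneg n (m + 1) (x := p - (1 - p)) (by linarith) (by linarith)]

lemma half_le_eval_bernsteinTail_div {n m : ℕ} (hm : 0 < m) (hmn : m ≤ n) :
    1 / 2 ≤ (bernsteinTail n m).eval ((m : ℝ) / n) := by
  rcases le_total (2 * m) n with h2m | h2m
  · have hn : (0 : ℝ) < n := by exact_mod_cast (show 0 < n by omega)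
    refine half_le_eval_bernsteinTail_of_two_mul_le (by positivity) ?_ h2m
      (by rw [mul_div_cancel₀ _ hn.ne'])
    rw [div_lt_one hn]
    exact_mod_cast (show m < n by omega)
  · exact half_le_eval_bernsteinTail_of_le_two_mul hm hmn h2m

lemma half_le_eval_bernsteinTail_floor (n : ℕ) {p : ℝ} (hp0 : 0 ≤ p) (hp1 : p ≤ 1) :
    1 / 2 ≤ (bernsteinTail n ⌊n * p⌋₊).eval p := by
  set m := ⌊(n : ℝ) * p⌋₊
  rcases Nat.eq_zero_or_pos m with hm | hm
  · rw [hm, eval_bernsteinTail_zero]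
    norm_num
  have hmnp : (m : ℝ) ≤ n * p := Nat.floor_le (by positivity)
  have hmn : m ≤ n := Nat.floor_le_of_le (by nlinarith)
  have hn : (0 : ℝ) < n := by exact_mod_cast (show 0 < n by omega)
  have hpm : (m : ℝ) / n ≤ p := by
    rw [div_le_iff₀ hn]
    linarith
  calc 1 / 2 ≤ (bernsteinTail n m).eval ((m : ℝ) / n) := half_le_eval_bernsteinTail_div hm hmn
    _ ≤ (bernsteinTail n m).eval p :=
      monotoneOn_eval_bernsteinTail n m ⟨by positivity, hpm.trans hp1⟩ ⟨hp0, hp1⟩ hpm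

/-- The median of the binomial distribution `Bin(n,p)` lies in `[⌊np⌋, ⌈np⌉]`. -/
theorem binomial_median (n : ℕ) (p : ℝ) (hp0 : 0 ≤ p) (hp1 : p ≤ 1) :
    (1 / 2 : ℝ) ≤ ∑ k ∈ Finset.Icc 0 ⌈(n : ℝ) * p⌉₊,
        (n.choose k : ℝ) * p ^ k * (1 - p) ^ (n - k) ∧
    (1 / 2 : ℝ) ≤ ∑ k ∈ Finset.Icc ⌊(n : ℝ) * p⌋₊ n,
        (n.choose k : ℝ) * p ^ k * (1 - p) ^ (n - k) := by
  refine ⟨?_, by simpa only [eval_bernsteinTail] using half_le_eval_bernsteinTail_floor n hp0 hp1⟩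
  have hceil : ⌈(n : ℝ) * p⌉₊ ≤ n := Nat.ceil_le.2 (by nlinarith)
  have hfloor : ⌊(n : ℝ) * (1 - p)⌋₊ = n - ⌈(n : ℝ) * p⌉₊ := by
    rw [mul_one_sub]
    exact Nat.floor_natCast_sub n (by positivity)
  have h := half_le_eval_bernsteinTail_floor n (p := 1 - p) (by linarith) (by linarith)
  rw [hfloor, ← sum_Icc_zero_eval_eq_eval_bernsteinTail hceil] at h
  simpa only [bernsteinPolynomial.eval_eq] using h
end

section
/- Let M = {M_x} be a POVM on ℂ^d. Then the matrix representation C_M = Σ_x vec(M_x)·vec(M_x)†/Tr[M_x] of its measurement information channel is positive semidefinite, has operator norm at most 1, and trace norm Tr[C_M] equal to Σ_x Tr[M_x²]/Tr[M_x]. -/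
open Matrix
open scoped ComplexOrder

/-- Column-stacking vectorization: `vec(|i⟩⟨j|) = |j⟩⊗|i⟩`, i.e. `vec(M) (j,i) = M i j`. -/
def vec {d : ℕ} (M : Matrix (Fin d) (Fin d) ℂ) : Fin d × Fin d → ℂ :=
  fun p => M p.2 p.1

/-- Matrix representation `C_M = Σ_x vec(M_x)vec(M_x)†/Tr[M_x]` of the measurement
information channel of a POVM `{M_x}`. -/
noncomputable def micMatrix {d : ℕ} {X : Type*} [Fintype X]
    (M : X → Matrix (Fin d) (Fin d) ℂ) : Matrix (Fin d × Fin d) (Fin d × Fin d) ℂ :=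
  fun p q => ∑ x, _root_.vec (M x) p * star (_root_.vec (M x) q) / (M x).trace

/-!
`C_M` is a sum of rank-one terms `vec(M_x) vec(M_x)† / Tr M_x`, each positive semidefinite.
For the bound `C_M ≤ 1`, write a test vector as `vec W`. Cauchy–Schwarz for the semi-inner
product `⟪X, Y⟫ = Tr(Y M_x Xᴴ)` gives `|Tr(M_x W)|² ≤ Tr M_x · Tr(Wᴴ M_x W)`, i.e.
`vec(M_x) vec(M_x)† / Tr M_x ≤ 1 ⊗ M_x` in the Loewner order; summing over `x` and using
`Σ_x M_x = 1` gives `C_M ≤ 1 ⊗ 1 = 1`. For a positive element of a C⋆-algebra, `‖C‖ ≤ 1`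
is equivalent to `C ≤ 1`.
-/

namespace Matrix

open scoped Kronecker

theorem kronecker_sum {l m n p ι R : Type*} [NonUnitalNonAssocSemiring R] (A : Matrix l m R)
    (s : Finset ι) (B : ι → Matrix n p R) :
    A ⊗ₖ ∑ i ∈ s, B i = ∑ i ∈ s, A ⊗ₖ B i := by
  ext
  simp [Matrix.sum_apply, Finset.mul_sum]

theorem star_dotProduct_vecMulVec_self_star_mulVec {m R : Type*} [Fintype m] [CommSemiring R]
    [StarRing R] (a v : m → R) :
    star v ⬝ᵥ vecMulVec a (star a) *ᵥ v = star (star a ⬝ᵥ v) * (star a ⬝ᵥ v) := by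
  rw [vecMulVec_mulVec, op_smul_eq_smul, dotProduct_smul, smul_eq_mul, mul_comm,
    ← star_dotProduct_star, star_star]

variable {n : Type*} [Fintype n] [DecidableEq n]

theorem PosSemidef.normSq_trace_mul_le {A : Matrix n n ℂ} (hA : A.PosSemidef)
    (W : Matrix n n ℂ) :
    Complex.normSq (A * W).trace ≤ A.trace.re * (Wᴴ * A * W).trace.re := by
  let _ := A.toMatrixSeminormedAddCommGroup hA
  let _ := A.toMatrixInnerProductSpace hA
  have h := inner_mul_inner_self_le (𝕜 := ℂ) Wᴴ (1 : Matrix n n ℂ)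
  rw [norm_inner_symm (1 : Matrix n n ℂ), ← sq, ← Complex.normSq_eq_norm_sq] at h
  change Complex.normSq (1 * A * Wᴴᴴ).trace ≤
    (Wᴴ * A * Wᴴᴴ).trace.re * (1 * A * 1ᴴ).trace.re at h
  rwa [conjTranspose_conjTranspose, conjTranspose_one, Matrix.one_mul, Matrix.mul_one,
    mul_comm] at h

open scoped MatrixOrder in
theorem PosSemidef.inv_trace_smul_vecMulVec_le_one_kronecker {A : Matrix n n ℂ}
    (hA : A.PosSemidef) :
    (A.trace)⁻¹ • vecMulVec A.vec (star A.vec) ≤ (1 : Matrix n n ℂ) ⊗ₖ A := by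
  have hP := (posSemidef_vecMulVec_self_star A.vec).smul (inv_nonneg.2 hA.trace_nonneg)
  rw [le_iff, posSemidef_iff_dotProduct_mulVec]
  refine ⟨(PosSemidef.one.kronecker hA).1.sub hP.1, fun v => ?_⟩
  obtain ⟨W, rfl⟩ := vec_bijective.2 v
  rw [sub_mulVec, dotProduct_sub, sub_nonneg, smul_mulVec, dotProduct_smul,
    star_dotProduct_vecMulVec_self_star_mulVec, ← vec_mul_eq_mulVec, star_vec_dotProduct_vec,
    star_vec_dotProduct_vec, hA.1.eq]
  have hs := (hA.conjTranspose_mul_mul_same W).trace_nonneg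
  rw [Matrix.mul_assoc] at hs
  have ht := hA.trace_nonneg
  rw [Complex.eq_re_of_ofReal_le ht, Complex.eq_re_of_ofReal_le hs, Complex.star_def,
    ← Complex.normSq_eq_conj_mul_self, ← Complex.ofReal_inv, smul_eq_mul,
    ← Complex.ofReal_mul, Complex.real_le_real, ← div_eq_inv_mul]
  rw [Complex.nonneg_iff] at hs ht
  exact div_le_of_le_mul₀ ht.1 hs.1
    (by simpa [Matrix.mul_assoc, mul_comm] using hA.normSq_trace_mul_le W)

end Matrix

section micMatrix

variable {d : ℕ} {X : Type*} [Fintype X]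

theorem micMatrix_eq_sum (M : X → Matrix (Fin d) (Fin d) ℂ) :
    micMatrix M = ∑ x, ((M x).trace)⁻¹ • vecMulVec (M x).vec (star (M x).vec) := by
  ext p q
  simp only [micMatrix, Matrix.sum_apply, Matrix.smul_apply, vecMulVec_apply, smul_eq_mul]
  exact Finset.sum_congr rfl fun x _ => div_eq_inv_mul _ _

theorem trace_micMatrix (M : X → Matrix (Fin d) (Fin d) ℂ) (hM : ∀ x, (M x).IsHermitian) :
    (micMatrix M).trace = ∑ x, (M x * M x).trace / (M x).trace := by
  rw [micMatrix_eq_sum, trace_sum]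
  refine Finset.sum_congr rfl fun x _ => ?_
  rw [trace_smul, trace_vecMulVec, dotProduct_comm, star_vec_dotProduct_vec, (hM x).eq,
    smul_eq_mul, div_eq_inv_mul]

end micMatrix

open scoped MatrixOrder Kronecker Matrix.Norms.L2Operator in
theorem micMatrix_posSemidef_opNorm_trace {d : ℕ} {X : Type*} [Fintype X]
    (M : X → Matrix (Fin d) (Fin d) ℂ)
    (hpsd : ∀ x, (M x).PosSemidef) (hsum : ∑ x, M x = 1) :
    (micMatrix M).PosSemidef ∧
    ‖Matrix.toEuclideanCLM (𝕜 := ℂ) (micMatrix M)‖ ≤ 1 ∧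
    (micMatrix M).trace = ∑ x, (M x * M x).trace / (M x).trace := by
  have hC : 0 ≤ micMatrix M := by
    rw [micMatrix_eq_sum, nonneg_iff_posSemidef]
    exact posSemidef_sum _ fun x _ =>
      (posSemidef_vecMulVec_self_star _).smul (inv_nonneg.2 (hpsd x).trace_nonneg)
  have hC1 : micMatrix M ≤ 1 := calc
    micMatrix M ≤ ∑ x, (1 : Matrix (Fin d) (Fin d) ℂ) ⊗ₖ M x := by
      rw [micMatrix_eq_sum]
      exact Finset.sum_le_sum fun x _ => (hpsd x).inv_trace_smul_vecMulVec_le_one_kronecker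
    _ = 1 := by rw [← kronecker_sum, hsum, one_kronecker_one]
  exact ⟨nonneg_iff_posSemidef.1 hC, (CStarAlgebra.norm_le_one_iff_of_nonneg _ hC).2 hC1,
    trace_micMatrix M fun x => (hpsd x).1⟩
end
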